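/- Let G be a graph with m edges, m̃ ≥ max{20, e^{-1/10}·m}, p = 1/m̃, and let u, v be adjacent vertices. Draw S by including each non-u, non-v vertex independently with probability p. Then the probability that the pair {u,v} is lonely in S is at least 1/25. -/

import Mathlib

/-!
The lonely event contains the event that `S` avoids every non-isolated vertex: then any edge
of `S ∪ {u, v}` has both ends in `{u, v}`. There are at most `2m` non-isolated vertices, so this
event has probability at least `(1 - p) ^ (2m) ≥ exp (-2mp / (1 - p)) ≥ exp (-3) ≥ 1/25`,
since `2mp ≤ 2 e^{1/10} ≤ 20/9` and `p ≤ 1/20`.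
-/

open Finset Real

section Bernoulli

variable {ι R : Type*} [Fintype ι] [DecidableEq ι]

/-- The probability of `P` when every coordinate of `g : ι → Bool` is independently `true`
with probability `p`. -/
def bernoulliProb [CommRing R] (p : R) (P : (ι → Bool) → Prop) [DecidablePred P] : R :=
  ∑ g : ι → Bool, if P g then ∏ w, (if g w then p else 1 - p) else 0

theorem bernoulliProb_mono [CommRing R] [PartialOrder R] [IsOrderedRing R] {p : R}
    (hp₀ : 0 ≤ p) (hp₁ : p ≤ 1) {P Q : (ι → Bool) → Prop} [DecidablePred P] [DecidablePred Q]
    (hPQ : ∀ g, P g → Q g) : bernoulliProb p P ≤ bernoulliProb p Q := by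
  refine sum_le_sum fun g _ => ?_
  have hweight : 0 ≤ ∏ w, (if g w then p else 1 - p) :=
    prod_nonneg fun w _ => by split_ifs; exacts [hp₀, sub_nonneg.2 hp₁]
  by_cases hP : P g
  · rw [if_pos hP, if_pos (hPQ g hP)]
  · rw [if_neg hP]
    exact ite_nonneg hweight le_rfl

theorem bernoulliProb_forall_mem_eq_false [CommRing R] (p : R) (T : Finset ι) :
    bernoulliProb p (fun g => ∀ w ∈ T, g w = false) = (1 - p) ^ #T :=
  calc bernoulliProb p (fun g => ∀ w ∈ T, g w = false)
      = ∑ g : ι → Bool, ∏ w, if w ∈ T → g w = false then (if g w then p else 1 - p) else 0 :=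
        Fintype.sum_congr _ _ fun g => Fintype.prod_ite_zero.symm
    _ = ∏ w, ∑ b : Bool, if w ∈ T → b = false then (if b then p else 1 - p) else 0 :=
        (Fintype.prod_sum fun w (b : Bool) =>
          if w ∈ T → b = false then (if b then p else 1 - p) else 0).symm
    _ = ∏ w, if w ∈ T then 1 - p else 1 := by
        refine Fintype.prod_congr _ _ fun w => ?_
        by_cases hw : w ∈ T <;> simp [hw]
    _ = (1 - p) ^ #T := by rw [Fintype.prod_ite_mem, prod_const]

end Bernoulli

namespace SimpleGraph

variable {V : Type*} (G : SimpleGraph V)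

theorem card_support_le_two_mul_card_edgeFinset [Fintype V] [DecidableEq V] [DecidableRel G.Adj] :
    #G.support.toFinset ≤ 2 * #G.edgeFinset := by
  rw [← G.sum_degrees_support_eq_twice_card_edges, card_eq_sum_ones]
  exact sum_le_sum fun w hw => (G.degree_pos_iff_mem_support w).2 (Set.mem_toFinset.1 hw)

theorem adj_eq_pair_of_forall_mem_support_eq_false {u v : V} {S : V → Bool}
    (hS : ∀ w ∈ G.support, S w = false) (a b : V) (hab : G.Adj a b)
    (ha : S a = true ∨ a = u ∨ a = v) (hb : S b = true ∨ b = u ∨ b = v) :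
    (a = u ∧ b = v) ∨ (a = v ∧ b = u) := by
  have ha' : a = u ∨ a = v := ha.resolve_left (by simp [hS a ⟨b, hab⟩])
  have hb' : b = u ∨ b = v := hb.resolve_left (by simp [hS b ⟨a, hab.symm⟩])
  have hne := G.ne_of_adj hab
  rcases ha' with rfl | rfl <;> rcases hb' with rfl | rfl <;> tauto

end SimpleGraph

theorem Real.exp_neg_mul_div_one_sub_le_one_sub_pow {p : ℝ} (hp : p < 1) (n : ℕ) :
    exp (-(n * (p / (1 - p)))) ≤ (1 - p) ^ n := by
  have hp' : 0 < 1 - p := sub_pos.2 hp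
  have hinv : 1 / (1 - p) ≤ exp (p / (1 - p)) := by
    simpa [div_add_one hp'.ne'] using add_one_le_exp (p / (1 - p))
  have hstep : exp (-(p / (1 - p))) ≤ 1 - p := by
    rw [exp_neg]
    simpa using inv_anti₀ (by positivity) hinv
  rw [← mul_neg, exp_nat_mul]
  exact pow_le_pow_left₀ (exp_pos _).le hstep n

theorem Real.one_div_twentyfive_le_exp_neg_three : (1 : ℝ) / 25 ≤ exp (-3) := by
  have hexp : exp 3 < 25 :=
    calc exp 3 = exp 1 ^ 3 := by rw [← exp_nat_mul]; norm_num
      _ < 2.7182818286 ^ 3 := pow_lt_pow_left₀ exp_one_lt_d9 (exp_pos 1).le three_ne_zero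
      _ < 25 := by norm_num
  rw [exp_neg, one_div]
  exact inv_anti₀ (exp_pos 3) hexp.le

/-- With `p = 1 / m̃`, the exponent `2 m p / (1 - p)` is at most `3`. -/
theorem two_mul_div_one_sub_le_three {m mt : ℝ}
    (hmt : max 20 (exp (-(1 / 10)) * m) ≤ mt) : 2 * m * (1 / mt / (1 - 1 / mt)) ≤ 3 := by
  have h20 : 20 ≤ mt := le_of_max_le_left hmt
  have hexp : exp (1 / 10) ≤ 10 / 9 :=
    (exp_bound_div_one_sub_of_interval (by norm_num) (by norm_num)).trans_eq (by norm_num)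
  have hm : m ≤ 10 / 9 * mt := by
    have := le_of_max_le_right hmt
    rw [exp_neg, inv_mul_le_iff₀ (exp_pos _)] at this
    nlinarith
  rw [show 1 / mt / (1 - 1 / mt) = 1 / (mt - 1) by field_simp, mul_one_div,
    div_le_iff₀ (by linarith)]
  linarith

theorem neighborhood_lower_bound_general {V : Type*} [Fintype V] [DecidableEq V]
    (G : SimpleGraph V) [DecidableRel G.Adj] (mt p : ℝ)
    (hmt : max 20 (Real.exp (-(1/10)) * (G.edgeFinset.card : ℝ)) ≤ mt)
    (hp : p = 1 / mt) (u v : V) :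
    1 / 25 ≤ (∑ g : V → Bool,
        if (∀ a b, G.Adj a b → (g a = true ∨ a = u ∨ a = v) →
            (g b = true ∨ b = u ∨ b = v) → (a = u ∧ b = v) ∨ (a = v ∧ b = u))
          then ∏ w : V, (if g w then p else 1 - p) else 0) := by
  have h20 : 20 ≤ mt := le_of_max_le_left hmt
  have hp₀ : 0 ≤ p := by rw [hp]; positivity
  have hp₁ : p ≤ 1 / 20 := hp ▸ one_div_le_one_div_of_le (by norm_num) h20
  set T := G.support.toFinset
  have hT : (#T : ℝ) ≤ 2 * #G.edgeFinset := by
    exact_mod_cast G.card_support_le_two_mul_card_edgeFinset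
  have hexponent : #T * (p / (1 - p)) ≤ 3 := by
    refine le_trans ?_ (two_mul_div_one_sub_le_three hmt)
    rw [← hp]
    exact mul_le_mul_of_nonneg_right hT (div_nonneg hp₀ (by linarith))
  calc (1 : ℝ) / 25 ≤ exp (-3) := one_div_twentyfive_le_exp_neg_three
    _ ≤ exp (-(#T * (p / (1 - p)))) := exp_le_exp.2 (neg_le_neg hexponent)
    _ ≤ (1 - p) ^ #T := exp_neg_mul_div_one_sub_le_one_sub_pow (by linarith) _
    _ = bernoulliProb p (fun g => ∀ w ∈ T, g w = false) :=
        (bernoulliProb_forall_mem_eq_false p T).symm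
    _ ≤ bernoulliProb p _ := bernoulliProb_mono hp₀ (by linarith) fun g hg =>
        G.adj_eq_pair_of_forall_mem_support_eq_false fun w hw => hg w (Set.mem_toFinset.2 hw)

/-- Neighborhood factor lower bound: for adjacent vertices `u, v` and a random set `S`
including each vertex other than `u` and `v` independently with probability `p = 1/m̃`,
the pair `{u,v}` is lonely in `S` (no edge in `S ∪ {u,v}` other than possibly `uv`)
with probability at least `1/25`. (Membership of `u, v` themselves is irrelevant to
the event, so the product is taken over all vertices.) -/
theorem neighborhood_lower_bound {V : Type*} [Fintype V] [DecidableEq V]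
    (G : SimpleGraph V) [DecidableRel G.Adj] (mt p : ℝ)
    (hmt : max 20 (Real.exp (-(1/10)) * (G.edgeFinset.card : ℝ)) ≤ mt)
    (hp : p = 1 / mt) (u v : V) (huv : G.Adj u v) :
    1 / 25 ≤ (∑ g : V → Bool,
        if (∀ a b, G.Adj a b → (g a = true ∨ a = u ∨ a = v) →
            (g b = true ∨ b = u ∨ b = v) → (a = u ∧ b = v) ∨ (a = v ∧ b = u))
          then ∏ w : V, (if g w then p else 1 - p) else 0) :=
  neighborhood_lower_bound_general G mt p hmt hp u v
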